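/- Let C be a pointed, spanning polyhedral cone in E = ℝⁿ with C ≠ {0}, let D ⊆ E be a downset, and let σ be a face of C. If a ∈ E satisfies a − σ° ⊆ D and (a + C) ∩ D^σ = {a} (that is, a is a maximal element of D^σ := {x ∈ E | x − σ° ⊆ D}), then a lies in the topological boundary of D: a ∈ closure(D) and a ∉ interior(D). -/

import Mathlib

open Pointwise

/-- A polyhedral cone in `ℝⁿ`: an intersection of finitely many closed linear half-spaces. -/
def IsPolyCone {n : ℕ} (C : Set (Fin n → ℝ)) : Prop :=
  ∃ (m : ℕ) (ℓ : Fin m → ((Fin n → ℝ) →ₗ[ℝ] ℝ)), C = {x | ∀ i, 0 ≤ ℓ i x}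

/-- A face of a cone `C`: a subset of `C` containing `0`, closed under addition, and such
that whenever `x, y ∈ C` and `x + y` lies in the subset, both `x` and `y` do. -/
def IsConeFace {M : Type*} [AddCommMonoid M] (σ C : Set M) : Prop :=
  σ ⊆ C ∧ (0 : M) ∈ σ ∧ (∀ x ∈ σ, ∀ y ∈ σ, x + y ∈ σ) ∧
    ∀ x ∈ C, ∀ y ∈ C, x + y ∈ σ → x ∈ σ ∧ y ∈ σ

/-- A downset for the partial order `x ≼ y ↔ y - x ∈ C`. -/
def IsDownset {n : ℕ} (C D : Set (Fin n → ℝ)) : Prop :=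
  ∀ x y : Fin n → ℝ, y ∈ D → y - x ∈ C → x ∈ D

/-- The upper boundary downset `D^σ = {a | a - σ° ⊆ D}`. -/
def upSet {n : ℕ} (D σ : Set (Fin n → ℝ)) : Set (Fin n → ℝ) :=
  {a | ∀ s ∈ intrinsicInterior ℝ σ, a - s ∈ D}

/-- `a` is a cogenerator of the downset `D` along the face `τ` with nadir `σ`:
`(a + C) ∩ D^σ = a + τ` and no face `σ''` with `τ ⊆ σ'' ⊊ σ` satisfies `a - σ''° ⊆ D`. -/
def IsCogen {n : ℕ} (C D τ σ : Set (Fin n → ℝ)) (a : Fin n → ℝ) : Prop :=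
  (({a} + C) ∩ upSet D σ = {a} + τ) ∧
  ∀ σ'' : Set (Fin n → ℝ), IsConeFace σ'' C → τ ⊆ σ'' → σ'' ⊂ σ →
    ¬ (∀ s ∈ intrinsicInterior ℝ σ'', a - s ∈ D)

/-- A `σ`-vicinity of a point `p` of `E ⧸ span τ`: the image under the quotient map of
`u + σ° + C` for some `u` admitting a representative `w` of `p` with `w - u ∈ σ°`. -/
def IsVic {n : ℕ} (C σ τ : Set (Fin n → ℝ))
    (p : (Fin n → ℝ) ⧸ Submodule.span ℝ τ)
    (V : Set ((Fin n → ℝ) ⧸ Submodule.span ℝ τ)) : Prop :=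
  ∃ u w : Fin n → ℝ, (Submodule.span ℝ τ).mkQ w = p ∧
    w - u ∈ intrinsicInterior ℝ σ ∧
    V = (Submodule.span ℝ τ).mkQ '' ({u} + intrinsicInterior ℝ σ + C)

/-!
A face `σ` of a cone is itself a cone, so its relative interior `σ°` is stable under positive
scaling; hence `a - t • s ∈ D` for a fixed `s ∈ σ°` and every `t > 0`, and letting `t → 0` puts `a`
in the closure of `D`. If `a` were interior to `D`, then `a + t • c ∈ D` for some nonzero `c ∈ C`
and small `t > 0`; as `D` is a downset, `D ⊆ D^σ`, so `a + t • c` would be a second element of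
`(a + C) ∩ D^σ`.
-/

open Filter Topology

namespace IsPolyCone

variable {n : ℕ} {C : Set (Fin n → ℝ)}

lemma zero_mem (hC : IsPolyCone C) : (0 : Fin n → ℝ) ∈ C := by
  obtain ⟨m, ℓ, rfl⟩ := hC
  intro i
  simp

lemma smul_mem (hC : IsPolyCone C) : ∀ ⦃t : ℝ⦄, 0 ≤ t → ∀ ⦃x⦄, x ∈ C → t • x ∈ C := by
  obtain ⟨m, ℓ, rfl⟩ := hC
  intro t ht x hx i
  simpa using mul_nonneg ht (hx i)

end IsPolyCone

namespace IsConeFace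

variable {M : Type*} [AddCommMonoid M] {σ C : Set M}

lemma nsmul_mem (hσ : IsConeFace σ C) {x : M} (hx : x ∈ σ) (k : ℕ) : k • x ∈ σ := by
  induction k with
  | zero => simpa using hσ.2.1
  | succ k ih => simpa [succ_nsmul] using hσ.2.2.1 _ ih _ hx

/-- For `k ≥ t`, `t • x + (k - t) • x = k • x ∈ σ`, and a face contains both summands. -/
lemma smul_mem [Module ℝ M] (hσ : IsConeFace σ C)
    (hC : ∀ ⦃t : ℝ⦄, 0 ≤ t → ∀ ⦃x⦄, x ∈ C → t • x ∈ C) {t : ℝ} (ht : 0 ≤ t)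
    {x : M} (hx : x ∈ σ) : t • x ∈ σ := by
  obtain ⟨k, hk⟩ := exists_nat_ge t
  have hsum : t • x + ((k : ℝ) - t) • x ∈ σ := by
    rw [← add_smul, add_sub_cancel, Nat.cast_smul_eq_nsmul]
    exact hσ.nsmul_mem hx k
  exact (hσ.2.2.2 _ (hC ht (hσ.1 hx)) _ (hC (sub_nonneg.2 hk) (hσ.1 hx)) hsum).1

lemma convex [Module ℝ M] (hσ : IsConeFace σ C)
    (hC : ∀ ⦃t : ℝ⦄, 0 ≤ t → ∀ ⦃x⦄, x ∈ C → t • x ∈ C) : Convex ℝ σ :=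
  fun _ hx _ hy _ _ ha hb _ => hσ.2.2.1 _ (hσ.smul_mem hC ha hx) _ (hσ.smul_mem hC hb hy)

end IsConeFace

section IntrinsicInterior

variable {V : Type*} [NormedAddCommGroup V] [NormedSpace ℝ V] [FiniteDimensional ℝ V]

/-- Scaling by `t ≠ 0` is an affine automorphism fixing the cone `s`, hence also its relative
interior. -/
lemma smul_mem_intrinsicInterior_of_smul_mem {s : Set V}
    (hs : ∀ ⦃t : ℝ⦄, 0 < t → ∀ ⦃x⦄, x ∈ s → t • x ∈ s) {t : ℝ} (ht : 0 < t) {x : V}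
    (hx : x ∈ intrinsicInterior ℝ s) : t • x ∈ intrinsicInterior ℝ s := by
  let φ : V ≃ᵃ[ℝ] V := (LinearEquiv.smulOfNeZero ℝ V t ht.ne').toAffineEquiv
  have hφs : φ '' s = s := by
    refine (Set.image_subset_iff.2 fun y hy => hs ht hy).antisymm fun y hy => ?_
    exact ⟨t⁻¹ • y, hs (inv_pos.2 ht) hy, smul_inv_smul₀ ht.ne' y⟩
  rw [← hφs, AffineEquiv.intrinsicInterior_image]
  exact ⟨x, hx, rfl⟩

end IntrinsicInterior

section Ray

variable {E : Type*} [AddCommGroup E] [Module ℝ E] [TopologicalSpace E] [IsTopologicalAddGroup E]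
  [ContinuousSMul ℝ E]

lemma tendsto_add_smul_nhdsGT_zero (x v : E) :
    Tendsto (fun t : ℝ => x + t • v) (𝓝[>] 0) (𝓝 x) := by
  have : Continuous fun t : ℝ => x + t • v := by fun_prop
  simpa using (this.tendsto 0).mono_left nhdsWithin_le_nhds

lemma exists_pos_add_smul_mem_of_mem_interior {D : Set E} {x : E} (hx : x ∈ interior D)
    (v : E) : ∃ t : ℝ, 0 < t ∧ x + t • v ∈ D :=
  ((eventually_mem_nhdsWithin (s := Set.Ioi 0)).and
    ((tendsto_add_smul_nhdsGT_zero x v).eventually (mem_interior_iff_mem_nhds.1 hx))).exists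

end Ray

lemma IsDownset.subset_upSet {n : ℕ} {C D σ : Set (Fin n → ℝ)} (hD : IsDownset C D)
    (hσC : σ ⊆ C) : D ⊆ upSet D σ := fun y hy s hs =>
  hD _ y hy (by simpa using hσC (intrinsicInterior_subset hs))

theorem max_of_upSet_mem_frontier_general {n : ℕ} (C D σ : Set (Fin n → ℝ))
    (hC : IsPolyCone C)
    (hne : C ≠ {0}) (hD : IsDownset C D) (hσ : IsConeFace σ C) (a : Fin n → ℝ)
    (haD : ∀ s ∈ intrinsicInterior ℝ σ, a - s ∈ D)
    (hmax : ({a} + C) ∩ upSet D σ = {a}) :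
    a ∈ closure D ∧ a ∉ interior D := by
  have hσsmul : ∀ ⦃t : ℝ⦄, 0 < t → ∀ ⦃x⦄, x ∈ σ → t • x ∈ σ := fun t ht x hx =>
    hσ.smul_mem hC.smul_mem ht.le hx
  constructor
  · obtain ⟨s, hs⟩ := Set.Nonempty.intrinsicInterior
      (hσ.convex hC.smul_mem) ⟨0, hσ.2.1⟩
    refine mem_closure_of_tendsto (tendsto_add_smul_nhdsGT_zero a (-s)) ?_
    filter_upwards [self_mem_nhdsWithin] with t ht
    simpa [sub_eq_add_neg] using haD _ (smul_mem_intrinsicInterior_of_smul_mem hσsmul ht hs)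
  · intro ha
    obtain ⟨c, hcC, hc0⟩ := ((Set.nontrivial_iff_ne_singleton hC.zero_mem).2 hne).exists_ne 0
    obtain ⟨t, ht, hmem⟩ := exists_pos_add_smul_mem_of_mem_interior ha c
    have hup : a + t • c ∈ ({a} + C) ∩ upSet D σ :=
      ⟨Set.add_mem_add rfl (hC.smul_mem ht.le hcC), hD.subset_upSet hσ.1 hmem⟩
    rw [hmax, Set.mem_singleton_iff, add_eq_left, smul_eq_zero] at hup
    exact hup.elim ht.ne' hc0

/-- A maximal element of `D^σ` lies on the topological boundary of `D`. -/
theorem max_of_upSet_mem_frontier {n : ℕ} (C D σ : Set (Fin n → ℝ))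
    (hC : IsPolyCone C) (hpointed : C ∩ (-C) = {0}) (hspan : C - C = Set.univ)
    (hne : C ≠ {0}) (hD : IsDownset C D) (hσ : IsConeFace σ C) (a : Fin n → ℝ)
    (haD : ∀ s ∈ intrinsicInterior ℝ σ, a - s ∈ D)
    (hmax : ({a} + C) ∩ upSet D σ = {a}) :
    a ∈ closure D ∧ a ∉ interior D :=
  max_of_upSet_mem_frontier_general C D σ hC hne hD hσ a haD hmax
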